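/- For every m ≥ 3, the Nimber of Jacob's Ladder JL_m equals the Nimber of the Toggle position P_{0,1}(m,1), which equals the Nimber of the Toggle position P_{1,0}(m,1). -/

import Mathlib

namespace Toggle

variable {V : Type*} [Fintype V] [DecidableEq V]

/-- The closed neighborhood `N[v]` of a vertex as a `Finset`. -/
def closedNbhd (G : SimpleGraph V) [DecidableRel G.Adj] (v : V) : Finset V :=
  insert v (G.neighborFinset v)

/-- The result of a Toggle move at `v`: flip the weight of every vertex in `N[v]`. -/
def move (G : SimpleGraph V) [DecidableRel G.Adj] (ω : V → Bool) (v : V) : V → Bool :=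
  fun u => if u ∈ closedNbhd G v then !(ω u) else ω u

/-- Total weight of a position. -/
def weight (ω : V → Bool) : ℕ := (Finset.univ.filter (fun u => ω u = true)).card

/-- Weight of a position over the closed neighborhood of `v`. -/
def nbhdWeight (G : SimpleGraph V) [DecidableRel G.Adj] (ω : V → Bool) (v : V) : ℕ :=
  ((closedNbhd G v).filter (fun u => ω u = true)).card

/-- A Toggle move at `v` is legal iff `ω v = 1` and the move strictly decreases the
weight over `N[v]`. -/
def IsLegal (G : SimpleGraph V) [DecidableRel G.Adj] (ω : V → Bool) (v : V) : Prop :=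
  ω v = true ∧ nbhdWeight G (move G ω v) v < nbhdWeight G ω v

instance (G : SimpleGraph V) [DecidableRel G.Adj] (ω : V → Bool) (v : V) :
    Decidable (IsLegal G ω v) :=
  inferInstanceAs (Decidable (ω v = true ∧ nbhdWeight G (move G ω v) v < nbhdWeight G ω v))

theorem weight_move_lt (G : SimpleGraph V) [DecidableRel G.Adj] {ω : V → Bool} {v : V}
    (h : IsLegal G ω v) : weight (move G ω v) < weight ω := by
  have key : ∀ ψ : V → Bool,
      weight ψ = ((closedNbhd G v).filter (fun u => ψ u = true)).card
        + ((Finset.univ \ closedNbhd G v).filter (fun u => ψ u = true)).card := by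
    intro ψ
    rw [weight, ← Finset.card_union_of_disjoint
      (Finset.disjoint_filter_filter Finset.disjoint_sdiff)]
    congr 1
    ext u
    simp only [Finset.mem_filter, Finset.mem_union, Finset.mem_sdiff, Finset.mem_univ,
      true_and]
    tauto
  have hout : ((Finset.univ \ closedNbhd G v).filter (fun u => move G ω v u = true))
      = ((Finset.univ \ closedNbhd G v).filter (fun u => ω u = true)) := by
    apply Finset.filter_congr
    intro u hu
    rw [Finset.mem_sdiff] at hu
    simp [move, hu.2]
  have h2 := h.2
  rw [key (move G ω v), key ω, hout]
  unfold nbhdWeight at h2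
  omega

/-- Minimal excludant of a finite set of naturals. -/
noncomputable def mex (s : Finset ℕ) : ℕ := sInf {n : ℕ | n ∉ s}

/-- The Nimber (Grundy value) of a Toggle position. -/
noncomputable def grundy (G : SimpleGraph V) [DecidableRel G.Adj] (ω : V → Bool) : ℕ :=
  mex ((Finset.univ.filter (fun v => IsLegal G ω v)).attach.image
    (fun v => grundy G (move G ω v.1)))
termination_by weight ω
decreasing_by
  have hv := v.2
  rw [Finset.mem_filter] at hv
  exact weight_move_lt G hv.2

/-- One legal Toggle move transforms `ω` into `ω'`. -/
def Step (G : SimpleGraph V) [DecidableRel G.Adj] (ω ω' : V → Bool) : Prop :=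
  ∃ v, IsLegal G ω v ∧ ω' = move G ω v

/-- `ω'` is reachable from `ω` by a (possibly empty) sequence of legal moves. -/
def Reach (G : SimpleGraph V) [DecidableRel G.Adj] (ω ω' : V → Bool) : Prop :=
  Relation.ReflTransGen (Step G) ω ω'

/-- `v` is terminally unplayable at `ω`: unplayable at `ω` and at every position
reachable from `ω`. -/
def TerminallyUnplayable (G : SimpleGraph V) [DecidableRel G.Adj] (ω : V → Bool) (v : V) :
    Prop :=
  ∀ ω', Reach G ω ω' → ¬ IsLegal G ω' v

/-- `v` is penultimately unplayable for the initial position `ω₀`: at every position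
reachable from `ω₀`, after any legal move at a vertex `u ∈ N[v]`, the vertex `v` is
terminally unplayable. -/
def PenultimatelyUnplayableAt (G : SimpleGraph V) [DecidableRel G.Adj] (ω₀ : V → Bool)
    (v : V) : Prop :=
  ∀ ω', Reach G ω₀ ω' → ∀ u ∈ closedNbhd G v, IsLegal G ω' u →
    TerminallyUnplayable G (move G ω' u) v

/-- The position `ω₀` is penultimately unplayable if every vertex is. -/
def PenultimatelyUnplayable (G : SimpleGraph V) [DecidableRel G.Adj] (ω₀ : V → Bool) :
    Prop :=
  ∀ v, PenultimatelyUnplayableAt G ω₀ v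

/-- The path graph on `Fin n`, vertices `0, 1, …, n-1` in order. -/
def pathGraph (n : ℕ) : SimpleGraph (Fin n) :=
  SimpleGraph.fromRel (fun a b => (a : ℕ) + 1 = (b : ℕ))

instance (n : ℕ) : DecidableRel (pathGraph n).Adj := fun a b =>
  decidable_of_iff _ (SimpleGraph.fromRel_adj _ a b).symm

/-- The 2×m grid graph `L_{2,m}` (0-indexed rows and columns). -/
def gridGraph (m : ℕ) : SimpleGraph (Fin 2 × Fin m) :=
  SimpleGraph.fromRel (fun a b =>
    (a.1 = b.1 ∧ (a.2 : ℕ) + 1 = (b.2 : ℕ)) ∨ (a.2 = b.2 ∧ (a.1 : ℕ) + 1 = (b.1 : ℕ)))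

instance (m : ℕ) : DecidableRel (gridGraph m).Adj := fun a b =>
  decidable_of_iff _ (SimpleGraph.fromRel_adj _ a b).symm

/-- The generalized Petersen graph `P(m,k)`; the vertex `(0, i)` is the outer vertex
`u_i` and `(1, i)` is the inner vertex `w_i` (0-indexed). -/
def petersen (m k : ℕ) : SimpleGraph (Fin 2 × Fin m) :=
  SimpleGraph.fromRel (fun a b =>
    (a.1 = 0 ∧ b.1 = 0 ∧ ((a.2 : ℕ) + 1) % m = (b.2 : ℕ)) ∨
    (a.1 = 0 ∧ b.1 = 1 ∧ a.2 = b.2) ∨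
    (a.1 = 1 ∧ b.1 = 1 ∧ ((a.2 : ℕ) + k) % m = (b.2 : ℕ)))

instance (m k : ℕ) : DecidableRel (petersen m k).Adj := fun a b =>
  decidable_of_iff _ (SimpleGraph.fromRel_adj _ a b).symm

/-- The position on `P(m,k)` where every outer vertex has weight 1 and every inner
vertex has weight 0. -/
def P01 (m : ℕ) : Fin 2 × Fin m → Bool := fun p => decide (p.1 = 0)

/-- The position on `P(m,k)` where every inner vertex has weight 1 and every outer
vertex has weight 0. -/
def P10 (m : ℕ) : Fin 2 × Fin m → Bool := fun p => decide (p.1 = 1)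

/-- The position where every vertex has weight 1. -/
def P11 (m : ℕ) : Fin 2 × Fin m → Bool := fun _ => true

/-- The Toggle position `H_m` on `L_{2,m}` (columns 0-indexed): for `m ≠ 3`, weight 0
exactly at `(0,0), (0,m-1), (1,0), (1,1), (1,m-2), (1,m-1)`; for `m = 3`, weight 0
exactly at `(0,0), (0,2), (1,0), (1,2)`. -/
def Hpos (m : ℕ) : Fin 2 × Fin m → Bool := fun p =>
  if m = 3 then !(decide ((p.2 : ℕ) = 0 ∨ (p.2 : ℕ) = 2))
  else !(decide ((p.1 = 0 ∧ ((p.2 : ℕ) = 0 ∨ (p.2 : ℕ) = m - 1)) ∨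
                 (p.1 = 1 ∧ ((p.2 : ℕ) ≤ 1 ∨ m - 2 ≤ (p.2 : ℕ)))))

/-- The Toggle position `D_m` on `L_{2,m}` (columns 0-indexed): weight 0 exactly at
`(0,0), (0,m-2), (0,m-1), (1,0), (1,1), (1,m-1)`. -/
def Dpos (m : ℕ) : Fin 2 × Fin m → Bool := fun p =>
  !(decide ((p.1 = 0 ∧ ((p.2 : ℕ) = 0 ∨ m - 2 ≤ (p.2 : ℕ))) ∨
            (p.1 = 1 ∧ ((p.2 : ℕ) ≤ 1 ∨ (p.2 : ℕ) = m - 1))))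

/-- The Nimber of the position `H_m`. -/
noncomputable def GH (m : ℕ) : ℕ := grundy (gridGraph m) (Hpos m)

/-- The Nimber of the position `D_m`. -/
noncomputable def GD (m : ℕ) : ℕ := grundy (gridGraph m) (Dpos m)

/-- The cycle graph `C_m` on `Fin m`. -/
def cycleGraph (m : ℕ) : SimpleGraph (Fin m) :=
  SimpleGraph.fromRel (fun a b => ((a : ℕ) + 1) % m = (b : ℕ))

open scoped Classical in
/-- The Nimber of a position of Jacob's Ladder on `C_m`: a position is the `Finset` of
not-yet-removed vertices, and a move at a remaining vertex `v` removes all remaining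
vertices at distance at most 2 from `v` in `C_m`. -/
noncomputable def jlGrundy (m : ℕ) (S : Finset (Fin m)) : ℕ :=
  mex (S.attach.image (fun v =>
    jlGrundy m (S.filter (fun u => 2 < (cycleGraph m).dist v.1 u))))
termination_by S.card
decreasing_by
  apply Finset.card_lt_card
  rw [Finset.ssubset_iff_of_subset (Finset.filter_subset _ _)]
  exact ⟨v.1, v.2, by simp [SimpleGraph.dist_self]⟩

end Toggle


/-!
`P(m,1)` is the prism `K₂ □ C_m`, in which every closed neighbourhood has four vertices, so a
move is legal iff the vertex is lit and at most one vertex of its closed neighbourhood is unlit.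
Every position reachable from `P_{0,1}(m,1)` is determined by the set `P` of outer vertices
played so far, which are pairwise at distance at least 3 on the cycle: an outer vertex is lit
iff it lies outside `N[P]`, and an inner vertex is lit iff it belongs to `P`. In such a position
an inner vertex is never playable, and an outer vertex `j` is playable iff its whole closed
neighbourhood is lit, i.e. iff `j` is at distance at least 3 from `P`, which is exactly when `j`
is still present in Jacob's Ladder after playing `P`. Playing it yields the position of
`insert j P` on both sides, so the two game trees coincide. The equality with `P_{1,0}(m,1)`
comes from the automorphism of the prism exchanging its two layers.
-/

namespace Toggle

open Finset

section Legality

variable {V : Type*} [Fintype V] [DecidableEq V] (G : SimpleGraph V) [DecidableRel G.Adj]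

theorem mem_closedNbhd {u v : V} : u ∈ closedNbhd G v ↔ u = v ∨ G.Adj v u := by
  simp [closedNbhd]

theorem self_mem_closedNbhd (v : V) : v ∈ closedNbhd G v :=
  mem_insert_self v _

theorem card_closedNbhd (v : V) : #(closedNbhd G v) = G.degree v + 1 := by
  rw [closedNbhd, card_insert_of_notMem (by simp), SimpleGraph.card_neighborFinset_eq_degree]

theorem nbhdWeight_move (ω : V → Bool) (v : V) :
    nbhdWeight G (move G ω v) v = #{u ∈ closedNbhd G v | ω u = false} := by
  unfold nbhdWeight
  congr 1
  refine filter_congr fun u hu => ?_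
  simp [move, hu]

theorem isLegal_iff (ω : V → Bool) (v : V) :
    IsLegal G ω v ↔
      ω v = true ∧ 2 * #{u ∈ closedNbhd G v | ω u = false} < #(closedNbhd G v) := by
  have hsplit := card_filter_add_card_filter_not (s := closedNbhd G v) (ω · = true)
  simp only [Bool.not_eq_true] at hsplit
  rw [IsLegal, nbhdWeight_move, nbhdWeight]
  exact and_congr_right fun _ => by omega

theorem grundy_eq_mex (ω : V → Bool) :
    grundy G ω = mex (({v | IsLegal G ω v} : Finset V).image fun v => grundy G (move G ω v)) := by
  rw [grundy]
  congr 1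
  ext
  simp

end Legality

section Iso

variable {V W : Type*} [Fintype V] [DecidableEq V] [Fintype W] [DecidableEq W]
  {G : SimpleGraph V} {H : SimpleGraph W} [DecidableRel G.Adj] [DecidableRel H.Adj]
  (e : G ≃g H)

theorem grundy_congr {G' : SimpleGraph V} [DecidableRel G'.Adj] (h : G = G') (ω : V → Bool) :
    grundy G ω = grundy G' ω := by
  subst h
  congr

theorem mem_closedNbhd_iso {u v : V} : e u ∈ closedNbhd H (e v) ↔ u ∈ closedNbhd G v := by
  simp [closedNbhd, e.map_adj_iff]

theorem closedNbhd_iso (v : V) :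
    closedNbhd H (e v) = (closedNbhd G v).map e.toEquiv.toEmbedding := by
  ext w
  obtain ⟨u, rfl⟩ := e.surjective w
  exact (mem_closedNbhd_iso e).trans (mem_map' e.toEquiv.toEmbedding).symm

theorem move_comp_iso (ω : W → Bool) (v : V) :
    move G (ω ∘ e) v = move H ω (e v) ∘ e := by
  funext u
  simp [move, mem_closedNbhd_iso]

theorem isLegal_comp_iso (ω : W → Bool) (v : V) :
    IsLegal G (ω ∘ e) v ↔ IsLegal H ω (e v) := by
  simp only [isLegal_iff, closedNbhd_iso, filter_map, card_map]
  rfl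

theorem grundy_comp_iso (ω : W → Bool) : grundy G (ω ∘ e) = grundy H ω := by
  have hlegal : ({v | IsLegal G (ω ∘ e) v} : Finset V) =
      ({w | IsLegal H ω w} : Finset W).image e.symm := by
    ext v
    obtain ⟨w, rfl⟩ := e.symm.surjective v
    simp [isLegal_comp_iso]
  rw [grundy_eq_mex, grundy_eq_mex, hlegal, image_image]
  congr 1
  refine image_congr fun w hw => ?_
  rw [Function.comp_apply, move_comp_iso, e.apply_symm_apply, grundy_comp_iso]
termination_by weight ω
decreasing_by exact weight_move_lt H (mem_filter.1 hw).2

end Iso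

section Distance

variable {V : Type*} [Fintype V] [DecidableEq V] {G : SimpleGraph V} [DecidableRel G.Adj]

theorem dist_le_one_iff (hG : G.Connected) {u v : V} :
    G.dist u v ≤ 1 ↔ v ∈ closedNbhd G u := by
  rw [mem_closedNbhd, Nat.le_one_iff_eq_zero_or_eq_one, hG.dist_eq_zero_iff,
    SimpleGraph.dist_eq_one_iff_adj, eq_comm]

theorem dist_le_succ_iff (hG : G.Connected) {u v : V} (k : ℕ) :
    G.dist u v ≤ k + 1 ↔ ∃ w ∈ closedNbhd G v, G.dist u w ≤ k := by
  constructor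
  · intro h
    obtain ⟨p, hp⟩ := hG.exists_walk_length_eq_dist v u
    cases p with
    | nil => exact ⟨u, self_mem_closedNbhd G u, by simp⟩
    | cons hadj q =>
      refine ⟨_, (mem_closedNbhd G).2 (Or.inr hadj), ?_⟩
      have := SimpleGraph.dist_le q
      rw [SimpleGraph.Walk.length_cons] at hp
      rw [SimpleGraph.dist_comm] at h ⊢
      omega
  · rintro ⟨w, hw, hdist⟩
    have hwv : G.dist w v ≤ 1 := by
      rw [SimpleGraph.dist_comm, dist_le_one_iff hG]
      exact hw
    exact (hG.dist_triangle (v := w)).trans (by omega)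

theorem two_lt_dist_iff (hG : G.Connected) {u v : V} :
    2 < G.dist u v ↔ Disjoint (closedNbhd G u) (closedNbhd G v) := by
  rw [← not_le, dist_le_succ_iff hG 1, ← not_iff_not, not_not, not_disjoint_iff]
  simp only [dist_le_one_iff hG]
  tauto

end Distance

section JacobsLadder

variable {V : Type*} [Fintype V] [DecidableEq V] (G : SimpleGraph V)

/-- The vertices still present in Jacob's Ladder on `G` once the vertices of `P` have been
played. -/
noncomputable def jlRemaining (P : Finset V) : Finset V := {j | ∀ p ∈ P, 2 < G.dist p j}

theorem jlRemaining_empty : jlRemaining G ∅ = univ := by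
  simp [jlRemaining]

variable {G}

theorem notMem_of_mem_jlRemaining {P : Finset V} {j : V} (hj : j ∈ jlRemaining G P) : j ∉ P :=
  fun hjP => by simpa using (mem_filter.1 hj).2 j hjP

theorem jlRemaining_filter (P : Finset V) (i : V) :
    {u ∈ jlRemaining G P | 2 < G.dist i u} = jlRemaining G (insert i P) := by
  ext
  simp [jlRemaining, and_comm]

theorem card_jlRemaining_insert_lt {P : Finset V} {i : V} (hi : i ∈ jlRemaining G P) :
    #(jlRemaining G (insert i P)) < #(jlRemaining G P) := by
  rw [← jlRemaining_filter]
  exact card_lt_card (filter_ssubset.2 ⟨i, hi, by simp⟩)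

theorem mem_jlRemaining_iff_disjoint [DecidableRel G.Adj] (hG : G.Connected) {P : Finset V}
    {j : V} : j ∈ jlRemaining G P ↔ ∀ p ∈ P, Disjoint (closedNbhd G p) (closedNbhd G j) := by
  simp [jlRemaining, two_lt_dist_iff hG]

theorem pairwiseDisjoint_insert [DecidableRel G.Adj] (hG : G.Connected) {P : Finset V} {i : V}
    (hP : (P : Set V).PairwiseDisjoint (closedNbhd G)) (hi : i ∈ jlRemaining G P) :
    ((insert i P : Finset V) : Set V).PairwiseDisjoint (closedNbhd G) := by
  rw [coe_insert]
  exact hP.insert fun p hp _ => ((mem_jlRemaining_iff_disjoint hG).1 hi p hp).symm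

end JacobsLadder

section Prism

instance {α β : Type*} [DecidableEq α] [DecidableEq β] (G : SimpleGraph α) (H : SimpleGraph β)
    [DecidableRel G.Adj] [DecidableRel H.Adj] : DecidableRel (G □ H).Adj :=
  fun _ _ => decidable_of_iff' _ SimpleGraph.boxProd_adj

variable {V : Type*} (G : SimpleGraph V)

abbrev prism : SimpleGraph (Fin 2 × V) := (⊤ : SimpleGraph (Fin 2)) □ G

def prismSwap : prism G ≃g prism G where
  toEquiv := (Equiv.swap 0 1).prodCongr (Equiv.refl V)
  map_rel_iff' := by simp [SimpleGraph.boxProd_adj]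

variable [Fintype V] [DecidableEq V] [DecidableRel G.Adj]

/-- The position of Toggle on `prism G` reached from the layer `0` fully lit by playing the
vertices `(0, p)`, `p ∈ P`. -/
def prismPosition (P : Finset V) : Fin 2 × V → Bool := fun x =>
  if x.1 = 0 then decide (∀ p ∈ P, x.2 ∉ closedNbhd G p) else decide (x.2 ∈ P)

variable {G}

@[simp]
theorem prismPosition_zero (P : Finset V) (j : V) :
    prismPosition G P (0, j) = decide (∀ p ∈ P, j ∉ closedNbhd G p) := rfl

@[simp]
theorem prismPosition_one (P : Finset V) (j : V) :
    prismPosition G P (1, j) = decide (j ∈ P) := rfl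

theorem mem_closedNbhd_prism {x y : Fin 2 × V} :
    y ∈ closedNbhd (prism G) x ↔
      (y.1 = x.1 ∧ y.2 ∈ closedNbhd G x.2) ∨ (y.1 ≠ x.1 ∧ y.2 = x.2) := by
  simp only [mem_closedNbhd, SimpleGraph.boxProd_adj, SimpleGraph.top_adj, Prod.ext_iff]
  tauto

theorem card_closedNbhd_prism (c : Fin 2) (v : V) :
    #(closedNbhd (prism G) (c, v)) = G.degree v + 2 := by
  rw [card_closedNbhd, SimpleGraph.degree_boxProd, SimpleGraph.IsRegularOfDegree.top]
  simp
  omega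

theorem isLegal_prism_zero_iff (hG : G.Connected) {P : Finset V} {j : V}
    (hd₁ : 1 ≤ G.degree j) (hd₂ : G.degree j ≤ 2) :
    IsLegal (prism G) (prismPosition G P) (0, j) ↔ j ∈ jlRemaining G P := by
  have hrem : j ∈ jlRemaining G P ↔ ∀ w ∈ closedNbhd G j, prismPosition G P (0, w) = true := by
    simp only [mem_jlRemaining_iff_disjoint hG, disjoint_left, prismPosition_zero,
      decide_eq_true_eq]
    tauto
  rw [isLegal_iff, card_closedNbhd_prism, hrem]
  set Z := {u ∈ closedNbhd (prism G) (0, j) | prismPosition G P u = false}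
  have hinner : prismPosition G P (0, j) = true → (1, j) ∈ Z := by
    intro h
    have hj : j ∉ P := fun hjP => by
      simp only [prismPosition_zero, decide_eq_true_eq] at h
      exact h j hjP (self_mem_closedNbhd G j)
    simp [Z, mem_closedNbhd_prism, hj]
  constructor
  · rintro ⟨h0, hZ⟩ w hw
    by_contra hw0
    have hpair : {(1, j), (0, w)} ⊆ Z := by
      refine insert_subset (hinner h0) (singleton_subset_iff.2 ?_)
      simp_all [Z, mem_closedNbhd_prism]
    have := card_le_card hpair
    rw [card_pair (by simp)] at this
    omega
  · intro h
    refine ⟨h j (self_mem_closedNbhd G j), ?_⟩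
    have hsub : Z ⊆ {(1, j)} := by
      rintro ⟨c, k⟩ hu
      simp only [Z, mem_filter, mem_closedNbhd_prism] at hu
      obtain rfl | rfl : c = 0 ∨ c = 1 := by omega
      · obtain ⟨⟨-, hk⟩ | ⟨h01, -⟩, hk0⟩ := hu
        · simp [h k hk] at hk0
        · exact absurd rfl h01
      · simp_all
    have := card_le_card hsub
    rw [card_singleton] at this
    omega

theorem not_isLegal_prism_one {P : Finset V} (hP : (P : Set V).PairwiseDisjoint (closedNbhd G))
    (j : V) : ¬ IsLegal (prism G) (prismPosition G P) (1, j) := by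
  rw [isLegal_iff, card_closedNbhd_prism]
  rintro ⟨hj, hZ⟩
  simp only [prismPosition_one, decide_eq_true_eq] at hj
  set Z := {u ∈ closedNbhd (prism G) (1, j) | prismPosition G P u = false}
  have hsub : (closedNbhd (prism G) (1, j)).erase (1, j) ⊆ Z := by
    intro u hu
    refine mem_filter.2 ⟨mem_of_mem_erase hu, ?_⟩
    obtain ⟨c, k⟩ := u
    simp only [mem_erase, mem_closedNbhd_prism, ne_eq, Prod.mk.injEq] at hu
    obtain rfl | rfl : c = 0 ∨ c = 1 := by omega
    · obtain rfl : k = j := by tauto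
      simpa using ⟨k, hj, self_mem_closedNbhd G k⟩
    · have hkj : k ≠ j := by tauto
      have hk : k ∈ closedNbhd G j := by tauto
      simp only [prismPosition_one, decide_eq_false_iff_not]
      intro hkP
      exact disjoint_left.1 (hP hkP hj hkj) (self_mem_closedNbhd G k) hk
  have := card_le_card hsub
  rw [card_erase_of_mem (self_mem_closedNbhd _ _), card_closedNbhd_prism] at this
  omega

theorem filter_isLegal_prismPosition (hG : G.Connected) (hd₁ : ∀ v, 1 ≤ G.degree v)
    (hd₂ : ∀ v, G.degree v ≤ 2) {P : Finset V}
    (hP : (P : Set V).PairwiseDisjoint (closedNbhd G)) :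
    ({x | IsLegal (prism G) (prismPosition G P) x} : Finset (Fin 2 × V)) =
      (jlRemaining G P).image (0, ·) := by
  ext ⟨c, k⟩
  obtain rfl | rfl : c = 0 ∨ c = 1 := by omega
  · simp [isLegal_prism_zero_iff hG (hd₁ k) (hd₂ k)]
  · simp [not_isLegal_prism_one hP]

theorem move_prismPosition (hG : G.Connected) {P : Finset V} {i : V}
    (hi : i ∈ jlRemaining G P) :
    move (prism G) (prismPosition G P) (0, i) = prismPosition G (insert i P) := by
  funext ⟨c, k⟩
  obtain rfl | rfl : c = 0 ∨ c = 1 := by omega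
  · have hlit : k ∈ closedNbhd G i → ∀ p ∈ P, k ∉ closedNbhd G p := fun hk p hp hkp =>
      disjoint_left.1 ((mem_jlRemaining_iff_disjoint hG).1 hi p hp) hkp hk
    by_cases hk : k ∈ closedNbhd G i <;> simp_all [move, mem_closedNbhd_prism]
  · have hiP := notMem_of_mem_jlRemaining hi
    by_cases hk : k = i <;> simp_all [move, mem_closedNbhd_prism]

end Prism

section Cycle

theorem cycleGraph_eq (m : ℕ) : cycleGraph m = SimpleGraph.cycleGraph m := by
  ext a b
  have hmod (x : Fin m) : ((x : ℕ) + 1) % m = if (x : ℕ) + 1 = m then 0 else (x : ℕ) + 1 := by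
    split_ifs with h
    · rw [h, Nat.mod_self]
    · exact Nat.mod_eq_of_lt (by omega)
  rw [cycleGraph, SimpleGraph.fromRel_adj, SimpleGraph.cycleGraph_adj', hmod, hmod, ne_eq,
    Fin.ext_iff]
  rcases lt_trichotomy (a : ℕ) b with h | h | h
  · rw [Fin.coe_sub_iff_lt.2 h, Fin.coe_sub_iff_le.2 h.le]
    split_ifs <;> omega
  · rw [Fin.coe_sub_iff_le.2 h.le, Fin.coe_sub_iff_le.2 h.ge]
    omega
  · rw [Fin.coe_sub_iff_le.2 h.le, Fin.coe_sub_iff_lt.2 h]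
    split_ifs <;> omega

theorem petersen_one_eq_prism (m : ℕ) : petersen m 1 = prism (SimpleGraph.cycleGraph m) := by
  rw [← cycleGraph_eq]
  ext ⟨c, i⟩ ⟨d, j⟩
  obtain rfl | rfl : c = 0 ∨ c = 1 := by omega
  all_goals
    obtain rfl | rfl : d = 0 ∨ d = 1 := by omega
    all_goals simp [petersen, cycleGraph, SimpleGraph.boxProd_adj, SimpleGraph.fromRel_adj, eq_comm]

theorem jlGrundy_eq_mex (m : ℕ) (S : Finset (Fin m)) :
    jlGrundy m S =
      mex (S.image fun v => jlGrundy m {u ∈ S | 2 < (SimpleGraph.cycleGraph m).dist v u}) := by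
  rw [jlGrundy, cycleGraph_eq]
  congr 1
  ext
  simp

variable {m : ℕ}

theorem cycleGraph_connected_of_one_le (hm : 1 ≤ m) : (SimpleGraph.cycleGraph m).Connected := by
  obtain ⟨n, rfl⟩ := Nat.exists_eq_add_of_le' hm
  exact SimpleGraph.cycleGraph_connected

theorem cycleGraph_degree_eq_two (hm : 3 ≤ m) (v : Fin m) :
    (SimpleGraph.cycleGraph m).degree v = 2 := by
  obtain ⟨n, rfl⟩ := Nat.exists_eq_add_of_le' hm
  exact SimpleGraph.cycleGraph_degree_three_le

theorem prismPosition_empty (G : SimpleGraph (Fin m)) [DecidableRel G.Adj] :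
    prismPosition G ∅ = P01 m := by
  funext ⟨c, k⟩
  fin_cases c <;> simp [prismPosition, P01]

theorem P10_eq_comp_prismSwap (G : SimpleGraph (Fin m)) : P10 m = P01 m ∘ prismSwap G := by
  funext ⟨c, k⟩
  fin_cases c <;> rfl

theorem jlGrundy_jlRemaining (hm : 3 ≤ m) (P : Finset (Fin m))
    (hP : (P : Set (Fin m)).PairwiseDisjoint (closedNbhd (SimpleGraph.cycleGraph m))) :
    jlGrundy m (jlRemaining (SimpleGraph.cycleGraph m) P) =
      grundy (prism (SimpleGraph.cycleGraph m)) (prismPosition (SimpleGraph.cycleGraph m) P) := by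
  have hG := cycleGraph_connected_of_one_le (m := m) (by omega)
  have hdeg := cycleGraph_degree_eq_two hm
  rw [jlGrundy_eq_mex, grundy_eq_mex, filter_isLegal_prismPosition hG
    (fun v => by simp [hdeg]) (fun v => by simp [hdeg]) hP, image_image]
  congr 1
  refine image_congr fun i hi => ?_
  rw [Function.comp_apply, jlRemaining_filter, move_prismPosition hG hi,
    jlGrundy_jlRemaining hm (insert i P) (pairwiseDisjoint_insert hG hP hi)]
termination_by #(jlRemaining (SimpleGraph.cycleGraph m) P)
decreasing_by exact card_jlRemaining_insert_lt hi

end Cycle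

end Toggle

/-- for `m ≥ 3`, the Nimber of Jacob's Ladder `JL_m` equals the Nimber
of `P_{0,1}(m,1)`, which equals the Nimber of `P_{1,0}(m,1)`. -/
theorem statement14 (m : ℕ) (hm : 3 ≤ m) :
    Toggle.jlGrundy m Finset.univ
        = Toggle.grundy (Toggle.petersen m 1) (Toggle.P01 m) ∧
    Toggle.grundy (Toggle.petersen m 1) (Toggle.P01 m)
        = Toggle.grundy (Toggle.petersen m 1) (Toggle.P10 m) := by
  have hprism (ω : Fin 2 × Fin m → Bool) : Toggle.grundy (Toggle.petersen m 1) ω =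
      Toggle.grundy (Toggle.prism (SimpleGraph.cycleGraph m)) ω :=
    Toggle.grundy_congr (Toggle.petersen_one_eq_prism m) ω
  refine ⟨?_, ?_⟩
  · rw [hprism, ← Toggle.prismPosition_empty (SimpleGraph.cycleGraph m),
      ← Toggle.jlRemaining_empty (SimpleGraph.cycleGraph m),
      Toggle.jlGrundy_jlRemaining hm ∅ (by simp)]
  · rw [hprism, hprism, Toggle.P10_eq_comp_prismSwap (SimpleGraph.cycleGraph m), Toggle.grundy_comp_iso]
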